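/- arXiv:1806.00642 — 2 statements merged into one kernel-verified Lean document; each statement's English description precedes it below -/
import Mathlib

section
/- The maps 𝒰 ↦ Γ_𝒰 (from join-specifications to standard closure operators) and Γ ↦ 𝒰_Γ (where 𝒰_Γ = {S : ⋁S exists and ⋁S ∈ Γ(S)}) form a Galois connection between the lattice of join-specifications of P ordered by inclusion and the lattice of standard closure operators on P ordered by pointwise inclusion: Γ_𝒰 ≤ Γ if and only if 𝒰 ⊆ 𝒰_Γ. -/
variable {P : Type*} [PartialOrder P]

/-- Down-closure of a set. -/
def dcl (S : Set P) : Set P := {p | ∃ s ∈ S, p ≤ s}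

/-- Principal downset. -/
def pd (p : P) : Set P := {q | q ≤ p}

/-- Standard closure operator: extensive, monotone, idempotent, with Γ({p}) = p↓. -/
def IsStdClosure (Γ : Set P → Set P) : Prop :=
  (∀ S, S ⊆ Γ S) ∧ (∀ S T : Set P, S ⊆ T → Γ S ⊆ Γ T) ∧ (∀ S, Γ (Γ S) = Γ S) ∧
    ∀ p : P, Γ {p} = pd p

def IsClosedIn (Γ : Set P → Set P) (C : Set P) : Prop := Γ C = C

/-- Join-specification: all joins of members exist, and all singletons belong. -/
def IsJoinSpec (𝒰 : Set (Set P)) : Prop :=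
  (∀ S ∈ 𝒰, ∃ x : P, IsLUB S x) ∧ ∀ p : P, {p} ∈ 𝒰

/-- 𝒰-ideal: down-closed and closed under joins of members of 𝒰. -/
def IsUIdeal (𝒰 : Set (Set P)) (I : Set P) : Prop :=
  IsLowerSet I ∧ ∀ S ∈ 𝒰, S ⊆ I → ∀ x : P, IsLUB S x → x ∈ I

/-- The smallest 𝒰-ideal containing S. -/
def GammaU (𝒰 : Set (Set P)) (S : Set P) : Set P :=
  ⋂₀ {I : Set P | IsUIdeal 𝒰 I ∧ S ⊆ I}

/-- 𝒰⁺: sets whose join exists and lies in the 𝒰-ideal closure. -/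
def UPlus (𝒰 : Set (Set P)) : Set (Set P) :=
  {S : Set P | ∃ x : P, IsLUB S x ∧ x ∈ GammaU 𝒰 S}

/-- Υ_𝒰(S) = { ⋁T : T ∈ 𝒰⁺, T ⊆ S↓ }. -/
def Upsilon (𝒰 : Set (Set P)) (S : Set P) : Set P :=
  {x : P | ∃ T ∈ UPlus 𝒰, T ⊆ dcl S ∧ IsLUB T x}

/-- The complete lattice of 𝒰-ideals (meets = intersections, joins = closure of unions)
is a frame. -/
def IdealFrame (𝒰 : Set (Set P)) : Prop :=
  ∀ D : Set P, IsUIdeal 𝒰 D → ∀ 𝒞 : Set (Set P), (∀ C ∈ 𝒞, IsUIdeal 𝒰 C) →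
    D ∩ GammaU 𝒰 (⋃₀ 𝒞) = GammaU 𝒰 (⋃ C ∈ 𝒞, D ∩ C)

/-- The complete lattice of Γ-closed sets is a frame. -/
def ClosFrame (Γ : Set P → Set P) : Prop :=
  ∀ D : Set P, IsClosedIn Γ D → ∀ 𝒞 : Set (Set P), (∀ C ∈ 𝒞, IsClosedIn Γ C) →
    D ∩ Γ (⋃₀ 𝒞) = Γ (⋃ C ∈ 𝒞, D ∩ C)

theorem GammaU_subset_of_isUIdeal {𝒰 : Set (Set P)} {S I : Set P} (hI : IsUIdeal 𝒰 I)
    (hSI : S ⊆ I) : GammaU 𝒰 S ⊆ I :=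
  Set.sInter_subset_of_mem ⟨hI, hSI⟩

theorem isLUB_mem_GammaU {𝒰 : Set (Set P)} {S : Set P} (hS : S ∈ 𝒰) {x : P}
    (hx : IsLUB S x) : x ∈ GammaU 𝒰 S :=
  Set.mem_sInter.2 fun _ ⟨hI, hSI⟩ => hI.2 S hS hSI x hx

namespace IsStdClosure

variable {Γ : Set P → Set P}

theorem closure_subset_of_subset (hΓ : IsStdClosure Γ) {S T : Set P} (hTS : T ⊆ Γ S) :
    Γ T ⊆ Γ S :=
  hΓ.2.2.1 S ▸ hΓ.2.1 T (Γ S) hTS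

theorem isLowerSet (hΓ : IsStdClosure Γ) (S : Set P) : IsLowerSet (Γ S) := by
  intro a b hba ha
  have hb : b ∈ Γ {a} := by rw [hΓ.2.2.2 a]; exact hba
  exact hΓ.closure_subset_of_subset (Set.singleton_subset_iff.2 ha) hb

theorem isUIdeal (hΓ : IsStdClosure Γ) {𝒰 : Set (Set P)}
    (h𝒰 : 𝒰 ⊆ {T : Set P | ∃ x : P, IsLUB T x ∧ x ∈ Γ T}) (S : Set P) :
    IsUIdeal 𝒰 (Γ S) := by
  refine ⟨hΓ.isLowerSet S, fun T hT hTS x hx => ?_⟩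
  obtain ⟨y, hy, hyT⟩ := h𝒰 hT
  exact hx.unique hy ▸ hΓ.closure_subset_of_subset hTS hyT

end IsStdClosure

theorem stmt7 (𝒰 : Set (Set P)) (hU : IsJoinSpec 𝒰)
    (Γ : Set P → Set P) (hΓ : IsStdClosure Γ) :
    (∀ S : Set P, GammaU 𝒰 S ⊆ Γ S) ↔
      𝒰 ⊆ {S : Set P | ∃ x : P, IsLUB S x ∧ x ∈ Γ S} := by
  constructor
  · intro hle S hS
    obtain ⟨x, hx⟩ := hU.1 S hS
    exact ⟨x, hx, hle S (isLUB_mem_GammaU hS hx)⟩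
  · intro h𝒰 S
    exact GammaU_subset_of_isUIdeal (hΓ.isUIdeal h𝒰 S) (hΓ.1 S)
end

section
/- Let 𝒰 be a join-specification for a poset P. The lattice I_𝒰 of 𝒰-ideals is a frame if and only if for all p ∈ P and S ∈ 𝒰 with p ≤ ⋁S, one has p↓ ∩ Γ_𝒰(S) = Γ_𝒰(p↓ ∩ S↓). -/
variable {P : Type*} [PartialOrder P]

/-!
For the forward direction, apply distributivity to `p↓` and the principal ideals `s↓`, `s ∈ S`,
whose union is `S↓`. For the converse, given a 𝒰-ideal `D` and a family `𝒞` of 𝒰-ideals, let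
`M = Γ_𝒰(⋃_{C ∈ 𝒞} D ∩ C)`. The set `K = {q | q↓ ∩ D ⊆ M}` contains `⋃ 𝒞`, and the hypothesis
makes `K` closed under joins from 𝒰 (apply it to `r ≤ ⋁S` with `r ∈ D`). Hence `Γ_𝒰(⋃ 𝒞) ⊆ K`, which gives
`D ∩ Γ_𝒰(⋃ 𝒞) ⊆ M`.
-/

variable {𝒰 : Set (Set P)}

section GammaU

lemma gammaU_isUIdeal (S : Set P) : IsUIdeal 𝒰 (GammaU 𝒰 S) :=
  ⟨fun _ _ hba ha I hI => hI.1.1 hba (ha I hI),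
    fun T hT hTS x hx I hI => hI.1.2 T hT (fun _ ht => hTS ht I hI) x hx⟩

lemma subset_gammaU (S : Set P) : S ⊆ GammaU 𝒰 S :=
  fun _ hs _ hI => hI.2 hs

lemma gammaU_subset_of_isUIdeal {S I : Set P} (hI : IsUIdeal 𝒰 I) (hSI : S ⊆ I) :
    GammaU 𝒰 S ⊆ I :=
  fun _ hx => hx I ⟨hI, hSI⟩

lemma gammaU_mono {S T : Set P} (h : S ⊆ T) : GammaU 𝒰 S ⊆ GammaU 𝒰 T :=
  gammaU_subset_of_isUIdeal (gammaU_isUIdeal T) (h.trans (subset_gammaU T))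

lemma gammaU_dcl (S : Set P) : GammaU 𝒰 (dcl S) = GammaU 𝒰 S := by
  refine (gammaU_subset_of_isUIdeal (gammaU_isUIdeal S) ?_).antisymm
    (gammaU_mono fun s hs => ⟨s, hs, le_rfl⟩)
  rintro q ⟨s, hs, hqs⟩
  exact (gammaU_isUIdeal S).1 hqs (subset_gammaU S hs)

lemma le_lub_mem_gammaU {S : Set P} (hS : S ∈ 𝒰) {x r : P} (hx : IsLUB S x) (hrx : r ≤ x) :
    r ∈ GammaU 𝒰 S :=
  (gammaU_isUIdeal S).1 hrx ((gammaU_isUIdeal S).2 S hS (subset_gammaU S) x hx)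

lemma isUIdeal_pd (p : P) : IsUIdeal 𝒰 (pd p) :=
  ⟨fun _ _ hba ha => hba.trans ha, fun _ _ hT _ hx => hx.2 hT⟩

lemma IsUIdeal.inter {D C : Set P} (hD : IsUIdeal 𝒰 D) (hC : IsUIdeal 𝒰 C) :
    IsUIdeal 𝒰 (D ∩ C) :=
  ⟨hD.1.inter hC.1, fun T hT hTDC x hx =>
    ⟨hD.2 T hT (fun _ ht => (hTDC ht).1) x hx, hC.2 T hT (fun _ ht => (hTDC ht).2) x hx⟩⟩

lemma gammaU_biUnion_inter_subset_inter (D : Set P) (hD : IsUIdeal 𝒰 D) (𝒞 : Set (Set P)) :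
    GammaU 𝒰 (⋃ C ∈ 𝒞, D ∩ C) ⊆ D ∩ GammaU 𝒰 (⋃₀ 𝒞) := by
  refine gammaU_subset_of_isUIdeal (hD.inter (gammaU_isUIdeal _)) ?_
  simp only [Set.iUnion_subset_iff]
  exact fun C hC q hq => ⟨hq.1, subset_gammaU _ ⟨C, hC, hq.2⟩⟩

end GammaU

lemma sUnion_image_pd (S : Set P) : ⋃₀ (pd '' S) = dcl S := by
  ext q
  simp [dcl, pd]

lemma biUnion_image_pd_inter (D S : Set P) : ⋃ C ∈ pd '' S, D ∩ C = D ∩ dcl S := by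
  ext q
  simp [dcl, pd]

section Converse

variable (h𝒰 : ∀ p : P, ∀ S ∈ 𝒰, ∀ x : P, IsLUB S x → p ≤ x →
  pd p ∩ GammaU 𝒰 S = GammaU 𝒰 (pd p ∩ dcl S))
include h𝒰

lemma isUIdeal_setOf_pd_inter_subset {D M : Set P} (hD : IsLowerSet D) (hM : IsUIdeal 𝒰 M) :
    IsUIdeal 𝒰 {q | pd q ∩ D ⊆ M} := by
  refine ⟨fun a b hba ha r hr => ha ⟨hr.1.trans hba, hr.2⟩, ?_⟩
  intro S hS hSK y hy r ⟨hry, hrD⟩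
  have hr : r ∈ GammaU 𝒰 (pd r ∩ dcl S) := by
    rw [← h𝒰 r S hS y hy hry]
    exact ⟨le_rfl, le_lub_mem_gammaU hS hy hry⟩
  refine gammaU_subset_of_isUIdeal hM ?_ hr
  rintro t ⟨htr, s, hs, hts⟩
  exact hSK hs ⟨hts, hD htr hrD⟩

lemma inter_gammaU_sUnion_subset {D : Set P} (hD : IsUIdeal 𝒰 D) {𝒞 : Set (Set P)}
    (h𝒞 : ∀ C ∈ 𝒞, IsUIdeal 𝒰 C) :
    D ∩ GammaU 𝒰 (⋃₀ 𝒞) ⊆ GammaU 𝒰 (⋃ C ∈ 𝒞, D ∩ C) := by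
  set M := GammaU 𝒰 (⋃ C ∈ 𝒞, D ∩ C)
  have hK := isUIdeal_setOf_pd_inter_subset h𝒰 hD.1 (gammaU_isUIdeal (⋃ C ∈ 𝒞, D ∩ C))
  have hunion : ⋃₀ 𝒞 ⊆ {q | pd q ∩ D ⊆ M} := by
    rintro q ⟨C, hC, hqC⟩ r ⟨hrq, hrD⟩
    exact subset_gammaU _ (Set.mem_biUnion hC ⟨hrD, (h𝒞 C hC).1 hrq hqC⟩)
  rintro q ⟨hqD, hq⟩
  exact gammaU_subset_of_isUIdeal hK hunion hq ⟨le_rfl, hqD⟩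

end Converse

theorem stmt12_general (𝒰 : Set (Set P)) :
    IdealFrame 𝒰 ↔ ∀ p : P, ∀ S ∈ 𝒰, ∀ x : P, IsLUB S x → p ≤ x →
      pd p ∩ GammaU 𝒰 S = GammaU 𝒰 (pd p ∩ dcl S) := by
  constructor
  · intro hframe p S _ _ _ _
    have h := hframe (pd p) (isUIdeal_pd p) (pd '' S) (by
      rintro _ ⟨s, -, rfl⟩
      exact isUIdeal_pd s)
    rwa [sUnion_image_pd, biUnion_image_pd_inter, gammaU_dcl] at h
  · intro h𝒰 D hD 𝒞 h𝒞
    exact (inter_gammaU_sUnion_subset h𝒰 hD h𝒞).antisymm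
      (gammaU_biUnion_inter_subset_inter D hD 𝒞)

theorem stmt12 (𝒰 : Set (Set P)) (hU : IsJoinSpec 𝒰) :
    IdealFrame 𝒰 ↔ ∀ p : P, ∀ S ∈ 𝒰, ∀ x : P, IsLUB S x → p ≤ x →
      pd p ∩ GammaU 𝒰 S = GammaU 𝒰 (pd p ∩ dcl S) :=
  stmt12_general 𝒰
end
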